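/- arXiv:2208.06037 — 4 statements merged into one kernel-verified Lean document; each statement's English description precedes it below -/
import Mathlib

section
/- Let X be a real random variable on a probability space with E[X] = 0. Let K > 0 be such that the random variable exp(|X|/K) is integrable and E[exp(|X|/K) − 1 − |X|/K] ≤ 1. Then for every real h with |h|·K ≤ 1, E[exp(hX)] ≤ 1 + h²K², and hence E[exp(hX)] ≤ exp(h²K²). -/
open MeasureTheory ProbabilityTheory

/-! The Taylor remainder `ψ₁₁(t) = eᵗ - 1 - t` satisfies `ψ₁₁(t) ≤ ψ₁₁(|t|)` and, by convexity of
`exp`, `ψ₁₁(a u) ≤ a² ψ₁₁(u)` for `0 ≤ a ≤ 1` and `u ≥ 0`. With `a = |h| K` and `u = |X| / K`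
this gives `e^{hX} ≤ 1 + hX + h²K² ψ₁₁(|X|/K)` pointwise; taking expectations kills `hX` and
bounds the last term by `h²K²`. -/

namespace Real

/-- The Young function of the `ψ₁₁` Orlicz norm. -/
noncomputable def psi11 (u : ℝ) : ℝ := exp u - 1 - u

theorem psi11_le_psi11_abs (t : ℝ) : psi11 t ≤ psi11 |t| := by
  rcases le_or_gt 0 t with ht | ht
  · rw [abs_of_nonneg ht]
  · have hsinh : sinh t < t := sinh_lt_self_iff.2 ht
    rw [sinh_eq] at hsinh
    rw [psi11, psi11, abs_of_neg ht]
    linarith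

theorem exp_mul_sub_one_le {a : ℝ} (ha₀ : 0 ≤ a) (ha₁ : a ≤ 1) (u : ℝ) :
    exp (a * u) - 1 ≤ a * (exp u - 1) := by
  have h := convexOn_exp.2 (Set.mem_univ u) (Set.mem_univ 0) ha₀ (sub_nonneg.2 ha₁)
    (add_sub_cancel a 1)
  simp only [smul_eq_mul, mul_zero, add_zero, exp_zero, mul_one] at h
  linarith

theorem hasDerivAt_psi11 (u : ℝ) : HasDerivAt psi11 (exp u - 1) u :=
  ((hasDerivAt_exp u).sub_const 1).sub (hasDerivAt_id u)

theorem psi11_mul_le {a u : ℝ} (ha₀ : 0 ≤ a) (ha₁ : a ≤ 1) (hu : 0 ≤ u) :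
    psi11 (a * u) ≤ a ^ 2 * psi11 u := by
  set F : ℝ → ℝ := fun u => a ^ 2 * psi11 u - psi11 (a * u)
  have hF : ∀ x, HasDerivAt F (a * (a * (exp x - 1) - (exp (a * x) - 1))) x := fun x => by
    have := ((hasDerivAt_psi11 x).const_mul (a ^ 2)).sub
      ((hasDerivAt_psi11 (a * x)).comp x ((hasDerivAt_id x).const_mul a))
    exact this.congr_deriv (by ring)
  -- `F' ≥ 0` on `[0, ∞)` is exactly the convexity bound `exp_mul_sub_one_le`.
  have hmono : MonotoneOn F (Set.Ici 0) :=
    monotoneOn_of_hasDerivWithinAt_nonneg (convex_Ici 0)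
      (fun x _ => (hF x).continuousAt.continuousWithinAt)
      (fun x _ => (hF x).hasDerivWithinAt)
      (fun x _ => mul_nonneg ha₀ (sub_nonneg.2 (exp_mul_sub_one_le ha₀ ha₁ x)))
  simpa [F, psi11] using hmono Set.self_mem_Ici hu hu

theorem exp_le_one_add_add_sq_mul_psi11 {K h : ℝ} (hK : 0 < K) (hh : |h| * K ≤ 1) (x : ℝ) :
    exp (h * x) ≤ 1 + h * x + h ^ 2 * K ^ 2 * psi11 (|x| / K) := by
  have habs : |h * x| = (|h| * K) * (|x| / K) := by
    rw [abs_mul]; field_simp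
  have hscale := psi11_mul_le (by positivity) hh (by positivity : 0 ≤ |x| / K)
  rw [← habs, mul_pow, sq_abs] at hscale
  have := (psi11_le_psi11_abs (h * x)).trans hscale
  rw [psi11] at this
  linarith

theorem exp_mul_le_exp_abs_div {K h : ℝ} (hK : 0 < K) (hh : |h| * K ≤ 1) (x : ℝ) :
    exp (h * x) ≤ exp (|x| / K) := by
  refine exp_le_exp.2 ((le_abs_self _).trans ?_)
  rw [abs_mul, le_div_iff₀ hK, mul_right_comm]
  exact mul_le_of_le_one_left (abs_nonneg x) hh

end Real

open Real

theorem integral_exp_mul_le_one_add_sq {Ω : Type*} [MeasurableSpace Ω] {μ : Measure Ω}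
    [IsProbabilityMeasure μ] {X : Ω → ℝ} (hXint : Integrable X μ) (hmean : ∫ ω, X ω ∂μ = 0)
    {K : ℝ} (hK : 0 < K) (hint : Integrable (fun ω => exp (|X ω| / K)) μ)
    (horlicz : ∫ ω, psi11 (|X ω| / K) ∂μ ≤ 1) {h : ℝ} (hh : |h| * K ≤ 1) :
    ∫ ω, exp (h * X ω) ∂μ ≤ 1 + h ^ 2 * K ^ 2 := by
  have hψint : Integrable (fun ω => psi11 (|X ω| / K)) μ :=
    (hint.sub (integrable_const 1)).sub (hXint.abs.div_const K)
  have hexp_int : Integrable (fun ω => exp (h * X ω)) μ :=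
    hint.mono (continuous_exp.comp_aestronglyMeasurable (hXint.aestronglyMeasurable.const_mul h))
      (Filter.Eventually.of_forall fun ω => by
        simpa only [norm_eq_abs, abs_exp] using exp_mul_le_exp_abs_div hK hh (X ω))
  have hlin_int : Integrable (fun ω => 1 + h * X ω) μ :=
    (integrable_const 1).add (hXint.const_mul h)
  calc ∫ ω, exp (h * X ω) ∂μ
      ≤ ∫ ω, (1 + h * X ω + h ^ 2 * K ^ 2 * psi11 (|X ω| / K)) ∂μ :=
        integral_mono hexp_int (hlin_int.add (hψint.const_mul _))
          (fun ω => exp_le_one_add_add_sq_mul_psi11 hK hh (X ω))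
    _ = 1 + h ^ 2 * K ^ 2 * ∫ ω, psi11 (|X ω| / K) ∂μ := by
        rw [integral_add hlin_int (hψint.const_mul _), integral_add (integrable_const 1)
          (hXint.const_mul h), integral_const, integral_const_mul, integral_const_mul, hmean]
        simp
    _ ≤ 1 + h ^ 2 * K ^ 2 := by
        have := mul_le_mul_of_nonneg_left horlicz (by positivity : 0 ≤ h ^ 2 * K ^ 2)
        linarith

/-- Theorem 1: if `E X = 0` and `K > 0` is admissible for the `ψ₁₁` Orlicz norm of `X`
(i.e. `E[exp(|X|/K) − 1 − |X|/K] ≤ 1`), then for every real `h` with `|h| K ≤ 1`,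
`E[exp(hX)] ≤ 1 + h² K² ≤ exp(h² K²)`. -/
theorem mgf_le_of_psi11_norm_le {Ω : Type*} [MeasureSpace Ω]
    [IsProbabilityMeasure (ℙ : Measure Ω)] (X : Ω → ℝ)
    (hXint : Integrable X) (hmean : ∫ ω, X ω = 0)
    (K : ℝ) (hK : 0 < K)
    (hint : Integrable (fun ω => Real.exp (|X ω| / K)))
    (horlicz : ∫ ω, (Real.exp (|X ω| / K) - 1 - |X ω| / K) ≤ 1)
    (h : ℝ) (hh : |h| * K ≤ 1) :
    (∫ ω, Real.exp (h * X ω)) ≤ 1 + h ^ 2 * K ^ 2 ∧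
      (∫ ω, Real.exp (h * X ω)) ≤ Real.exp (h ^ 2 * K ^ 2) := by
  have hmgf := integral_exp_mul_le_one_add_sq hXint hmean hK hint horlicz hh
  exact ⟨hmgf, hmgf.trans (by linarith [add_one_le_exp (h ^ 2 * K ^ 2)])⟩
end

section
/- Let X₁, …, Xₙ be independent real random variables on a probability space with E[Xᵢ] = 0 for each i, and let K₁, …, Kₙ > 0 be such that for each i, exp(|Xᵢ|/Kᵢ) is integrable and E[exp(|Xᵢ|/Kᵢ) − 1 − |Xᵢ|/Kᵢ] ≤ 1. Set Sₙ = X₁ + ⋯ + Xₙ, B² = K₁² + ⋯ + Kₙ², and M = max(K₁, …, Kₙ). Then for every real x with 0 ≤ x ≤ 2B²/M, P(Sₙ ≥ x) ≤ exp(−x²/(4B²)). -/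
open MeasureTheory ProbabilityTheory Finset

/-!
Chernoff's method. With `ψ₁₁(u) = exp u - 1 - u`, one has `exp v ≤ 1 + v + ψ₁₁(|v|)` and
`ψ₁₁(λu) ≤ λ² ψ₁₁(u)` for `0 ≤ λ ≤ 1`, so for `0 ≤ t Kᵢ ≤ 1` the mean-zero `Xᵢ` satisfies
`E exp(t Xᵢ) ≤ 1 + t² Kᵢ² E ψ₁₁(|Xᵢ|/Kᵢ) ≤ exp(t² Kᵢ²)`. By independence
`P(Sₙ ≥ x) ≤ exp(-t x + t² B²)`, and the optimal `t = x / (2B²)` is admissible exactly when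
`x ≤ 2B²/M`.
-/

noncomputable def psi11 (u : ℝ) : ℝ := Real.exp u - 1 - u

lemma exp_le_one_add_add_psi11_abs (v : ℝ) : Real.exp v ≤ 1 + v + psi11 |v| := by
  rcases le_or_gt 0 v with hv | hv
  · simp [psi11, abs_of_nonneg hv]
  · have hsinh : Real.sinh v ≤ v := Real.sinh_le_self_iff.2 hv.le
    rw [Real.sinh_eq] at hsinh
    rw [psi11, abs_of_neg hv]
    linarith

lemma psi11_mul_le {l u : ℝ} (hl0 : 0 ≤ l) (hl1 : l ≤ 1) (hu : 0 ≤ u) :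
    psi11 (l * u) ≤ l ^ 2 * psi11 u := by
  have hψ : ∀ c y : ℝ, HasDerivAt (fun y => psi11 (c * y)) (c * (Real.exp (c * y) - 1)) y := by
    intro c y
    have hlin := (hasDerivAt_id' y).const_mul c
    rw [show c * (Real.exp (c * y) - 1) = Real.exp (c * y) * (c * 1) - c * 1 by ring]
    exact ((hlin.exp).sub_const 1).sub hlin
  have hg : ∀ y, HasDerivAt (fun y => l ^ 2 * psi11 y - psi11 (l * y))
      (l ^ 2 * (Real.exp y - 1) - l * (Real.exp (l * y) - 1)) y := fun y => by
    have h := ((hψ 1 y).const_mul (l ^ 2)).sub (hψ l y)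
    simp only [one_mul] at h
    exact h
  -- convexity of `exp` between `0` and `y` makes this derivative nonnegative everywhere
  have hg' : ∀ y, 0 ≤ l ^ 2 * (Real.exp y - 1) - l * (Real.exp (l * y) - 1) := by
    intro y
    have hconv := convexOn_exp.2 (Set.mem_univ 0) (Set.mem_univ y) (sub_nonneg.2 hl1) hl0
      (by ring)
    simp only [smul_eq_mul, mul_zero, zero_add, Real.exp_zero, mul_one] at hconv
    nlinarith
  simpa [psi11] using monotone_of_hasDerivAt_nonneg hg hg' hu

section SingleVariable

variable {Ω : Type*} [MeasurableSpace Ω] {μ : Measure Ω} {Y : Ω → ℝ} {K t : ℝ}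

lemma integrable_exp_mul_of_integrable_exp_abs_div (hK : 0 < K) (htK : |t| * K ≤ 1)
    (hY : AEMeasurable Y μ) (hint : Integrable (fun ω => Real.exp (|Y ω| / K)) μ) :
    Integrable (fun ω => Real.exp (t * Y ω)) μ := by
  refine hint.mono (by fun_prop) (ae_of_all _ fun ω => ?_)
  simp only [Real.norm_eq_abs, Real.abs_exp, Real.exp_le_exp]
  calc t * Y ω ≤ |t| * |Y ω| := by rw [← abs_mul]; exact le_abs_self _
    _ ≤ |Y ω| / K := by rw [le_div_iff₀ hK]; nlinarith [abs_nonneg (Y ω)]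

lemma mgf_le_exp_of_integral_psi11_le_one [IsProbabilityMeasure μ] (hK : 0 < K) (ht0 : 0 ≤ t)
    (htK : t * K ≤ 1) (hY : Integrable Y μ) (hmean : ∫ ω, Y ω ∂μ = 0)
    (hint : Integrable (fun ω => Real.exp (|Y ω| / K)) μ)
    (horlicz : ∫ ω, psi11 (|Y ω| / K) ∂μ ≤ 1) :
    mgf Y μ t ≤ Real.exp (t ^ 2 * K ^ 2) := by
  have hpt : ∀ ω, Real.exp (t * Y ω) ≤ 1 + t * Y ω + (t * K) ^ 2 * psi11 (|Y ω| / K) := by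
    intro ω
    have habs : |t * Y ω| = t * K * (|Y ω| / K) := by
      rw [abs_mul, abs_of_nonneg ht0]; field_simp
    have hscale := psi11_mul_le (mul_nonneg ht0 hK.le) htK (div_nonneg (abs_nonneg (Y ω)) hK.le)
    have hexp_le := exp_le_one_add_add_psi11_abs (t * Y ω)
    rw [habs] at hexp_le
    linarith
  have hexp : Integrable (fun ω => Real.exp (t * Y ω)) μ :=
    integrable_exp_mul_of_integrable_exp_abs_div hK (by rwa [abs_of_nonneg ht0])
      hY.aemeasurable hint
  have hψ : Integrable (fun ω => psi11 (|Y ω| / K)) μ :=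
    (hint.sub (integrable_const 1)).sub (hY.abs.div_const K)
  have hlin : Integrable (fun ω => 1 + t * Y ω) μ := (integrable_const 1).add (hY.const_mul t)
  calc mgf Y μ t ≤ ∫ ω, (1 + t * Y ω + (t * K) ^ 2 * psi11 (|Y ω| / K)) ∂μ :=
        integral_mono hexp (hlin.add (hψ.const_mul _)) hpt
    _ = 1 + t * ∫ ω, Y ω ∂μ + (t * K) ^ 2 * ∫ ω, psi11 (|Y ω| / K) ∂μ := by
        rw [integral_add hlin (hψ.const_mul _), integral_add (integrable_const 1)
          (hY.const_mul t), integral_const_mul, integral_const_mul]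
        simp
    _ ≤ 1 + t ^ 2 * K ^ 2 := by
        rw [hmean]; nlinarith [mul_le_mul_of_nonneg_left horlicz (sq_nonneg (t * K))]
    _ ≤ Real.exp (t ^ 2 * K ^ 2) := by linarith [Real.add_one_le_exp (t ^ 2 * K ^ 2)]

end SingleVariable

namespace ProbabilityTheory

variable {Ω ι : Type*} [MeasurableSpace Ω] {μ : Measure Ω} {X : ι → Ω → ℝ} {t : ℝ}

lemma iIndepFun.integrable_exp_mul_sum₀ (h_indep : iIndepFun X μ)
    (h_meas : ∀ i, AEMeasurable (X i) μ) {s : Finset ι}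
    (h_int : ∀ i ∈ s, Integrable (fun ω => Real.exp (t * X i ω)) μ) :
    Integrable (fun ω => Real.exp (t * (∑ i ∈ s, X i) ω)) μ := by
  have : IsProbabilityMeasure μ := h_indep.isProbabilityMeasure
  -- `mgf` takes the junk value `0` off integrability, so a positive `mgf` certifies it
  rw [← mgf_pos_iff, h_indep.mgf_sum₀ h_meas]
  exact prod_pos fun i hi => mgf_pos (h_int i hi)

lemma iIndepFun.measureReal_sum_ge_le_exp (h_indep : iIndepFun X μ)
    (h_meas : ∀ i, AEMeasurable (X i) μ) {s : Finset ι} (c : ι → ℝ) (ht : 0 ≤ t)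
    (h_int : ∀ i ∈ s, Integrable (fun ω => Real.exp (t * X i ω)) μ)
    (h_mgf : ∀ i ∈ s, mgf (X i) μ t ≤ Real.exp (t ^ 2 * c i)) (x : ℝ) :
    μ.real {ω | x ≤ ∑ i ∈ s, X i ω} ≤ Real.exp (-t * x + t ^ 2 * ∑ i ∈ s, c i) := by
  have : IsProbabilityMeasure μ := h_indep.isProbabilityMeasure
  have hchernoff := measure_ge_le_exp_mul_mgf x ht (h_indep.integrable_exp_mul_sum₀ h_meas h_int)
  simp only [Finset.sum_apply] at hchernoff
  refine hchernoff.trans ?_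
  rw [h_indep.mgf_sum₀ h_meas, Real.exp_add, mul_sum, Real.exp_sum]
  gcongr with i hi
  · exact fun i _ => mgf_nonneg
  · exact h_mgf i hi

end ProbabilityTheory

/-- Theorem 2, first case: for independent mean-zero `Xᵢ` with admissible `ψ₁₁`-Orlicz
constants `Kᵢ`, with `B² = ∑ Kᵢ²` and `M = max Kᵢ`, one has
`P(Sₙ ≥ x) ≤ exp(−x²/(4B²))` for `0 ≤ x ≤ 2B²/M`. -/
theorem tail_le_gaussian_part {Ω : Type*} [MeasureSpace Ω]
    [IsProbabilityMeasure (ℙ : Measure Ω)]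
    {ι : Type*} [Fintype ι] [Nonempty ι]
    (X : ι → Ω → ℝ) (K : ι → ℝ)
    (hindep : iIndepFun X ℙ)
    (hXint : ∀ i, Integrable (X i)) (hmean : ∀ i, ∫ ω, X i ω = 0)
    (hK : ∀ i, 0 < K i)
    (hint : ∀ i, Integrable (fun ω => Real.exp (|X i ω| / K i)))
    (horlicz : ∀ i, ∫ ω, (Real.exp (|X i ω| / K i) - 1 - |X i ω| / K i) ≤ 1)
    (B M : ℝ) (hB : B ^ 2 = ∑ i, K i ^ 2)
    (hM : M = Finset.univ.sup' Finset.univ_nonempty K)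
    (x : ℝ) (hx0 : 0 ≤ x) (hx : x ≤ 2 * B ^ 2 / M) :
    (ℙ {ω | x ≤ ∑ i, X i ω}).toReal ≤ Real.exp (-(x ^ 2 / (4 * B ^ 2))) := by
  have hB2 : 0 < B ^ 2 := hB ▸ sum_pos (fun i _ => pow_pos (hK i) 2) univ_nonempty
  have hKM : ∀ i, K i ≤ M := fun i => hM ▸ le_sup' K (mem_univ i)
  have hM0 : 0 < M := (hK (Classical.arbitrary ι)).trans_le (hKM _)
  set t := x / (2 * B ^ 2) with ht
  have ht0 : 0 ≤ t := by positivity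
  have htK : ∀ i, t * K i ≤ 1 := fun i => by
    have : x * M ≤ 2 * B ^ 2 := (le_div_iff₀ hM0).1 hx
    rw [div_mul_eq_mul_div, div_le_one (by positivity)]
    nlinarith [hKM i]
  have hbound := hindep.measureReal_sum_ge_le_exp (fun i => (hXint i).aemeasurable)
    (s := univ) (fun i => K i ^ 2) ht0
    (fun i _ => integrable_exp_mul_of_integrable_exp_abs_div (hK i)
      (by rw [abs_of_nonneg ht0]; exact htK i) (hXint i).aemeasurable (hint i))
    (fun i _ => mgf_le_exp_of_integral_psi11_le_one (hK i) ht0 (htK i) (hXint i) (hmean i)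
      (hint i) (horlicz i)) x
  refine hbound.trans_eq ?_
  rw [← hB, ht]
  congr 1
  field_simp
  ring
end

section
/- Let ε > 0. Let X be a real random variable on a probability space with E[X] = 0, and let K > 0 be such that exp(|X|/K) is integrable and E[exp(|X|/K) − 1 − |X|/K] ≤ ε. Then for every real h with |h|·K ≤ 1, E[exp(hX)] ≤ 1 + ε h² K², and hence E[exp(hX)] ≤ exp(ε h² K²). -/
/-!
Write `ψ₁₁ u = exp u - 1 - u`, so that `exp (h x) = 1 + h x + ψ₁₁ (h x)`. Since `ψ₁₁ t ≤ ψ₁₁ |t|`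
and `ψ₁₁ (c u) ≤ c² ψ₁₁ u` for `0 ≤ c ≤ 1`, `u ≥ 0`, taking `c = |h| K` and `u = |x| / K` gives
the pointwise bound `exp (h x) ≤ 1 + h x + h² K² ψ₁₁ (|x| / K)`. Integrating it, the linear term
vanishes because `X` is centred, and the last term is at most `h² K² ε`.
-/

open MeasureTheory ProbabilityTheory Real

lemma nonneg_of_hasDerivAt_of_nonneg {f f' : ℝ → ℝ} (hf : ∀ x, HasDerivAt f (f' x) x)
    (hf₀ : f 0 = 0) (hf' : ∀ x, 0 ≤ x → 0 ≤ f' x) {x : ℝ} (hx : 0 ≤ x) : 0 ≤ f x := by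
  have hmono : MonotoneOn f (Set.Ici 0) := by
    refine monotoneOn_of_hasDerivWithinAt_nonneg (convex_Ici 0)
      (fun y _ ↦ (hf y).continuousAt.continuousWithinAt) (fun y _ ↦ (hf y).hasDerivWithinAt) ?_
    rw [interior_Ici]
    exact fun y hy ↦ hf' y (le_of_lt hy)
  simpa [hf₀] using hmono Set.self_mem_Ici hx hx

namespace Real

noncomputable def psi₁₁ (u : ℝ) : ℝ := exp u - 1 - u

lemma hasDerivAt_psi₁₁ (u : ℝ) : HasDerivAt psi₁₁ (exp u - 1) u :=
  ((hasDerivAt_exp u).sub_const 1).sub (hasDerivAt_id u)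

lemma psi₁₁_le_psi₁₁_abs (t : ℝ) : psi₁₁ t ≤ psi₁₁ |t| := by
  rcases le_total 0 t with ht | ht
  · rw [abs_of_nonneg ht]
  · have hsinh : sinh t ≤ t := sinh_le_self_iff.2 ht
    rw [sinh_eq] at hsinh
    rw [abs_of_nonpos ht, psi₁₁, psi₁₁]
    linarith

-- The derivative in `v` of `c² ψ₁₁ v - ψ₁₁ (c v)` is `c (c (exp v - 1) - (exp (c v) - 1)) ≥ 0`,
-- by convexity of `exp` between `0` and `v`.
lemma psi₁₁_mul_le {c : ℝ} (hc₀ : 0 ≤ c) (hc₁ : c ≤ 1) {u : ℝ} (hu : 0 ≤ u) :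
    psi₁₁ (c * u) ≤ c ^ 2 * psi₁₁ u := by
  have hderiv : ∀ v, HasDerivAt (fun v ↦ c ^ 2 * psi₁₁ v - psi₁₁ (c * v))
      (c ^ 2 * (exp v - 1) - c * (exp (c * v) - 1)) v := by
    intro v
    have hcomp := (hasDerivAt_psi₁₁ (c * v)).comp v ((hasDerivAt_id v).const_mul c)
    exact (((hasDerivAt_psi₁₁ v).const_mul (c ^ 2)).sub hcomp).congr_deriv (by ring)
  have hconvex : ∀ v, exp (c * v) - 1 ≤ c * (exp v - 1) := by
    intro v
    have := convexOn_exp.2 (Set.mem_univ 0) (Set.mem_univ v) (sub_nonneg.2 hc₁) hc₀ (by ring)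
    simp only [smul_eq_mul, mul_zero, zero_add, exp_zero, mul_one] at this
    linarith
  have := nonneg_of_hasDerivAt_of_nonneg hderiv (by simp [psi₁₁])
    (fun v _ ↦ by nlinarith [hconvex v]) hu
  linarith

lemma exp_mul_le_one_add_add_psi₁₁ {h K : ℝ} (hK : 0 < K) (hh : |h| * K ≤ 1) (x : ℝ) :
    exp (h * x) ≤ 1 + h * x + h ^ 2 * K ^ 2 * psi₁₁ (|x| / K) := by
  have habs : |h * x| = |h| * K * (|x| / K) := by
    rw [abs_mul]
    field_simp
  calc exp (h * x) = 1 + h * x + psi₁₁ (h * x) := by rw [psi₁₁]; ring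
    _ ≤ 1 + h * x + psi₁₁ (|h| * K * (|x| / K)) := by
      rw [← habs]
      gcongr
      exact psi₁₁_le_psi₁₁_abs _
    _ ≤ 1 + h * x + (|h| * K) ^ 2 * psi₁₁ (|x| / K) := by
      gcongr
      exact psi₁₁_mul_le (by positivity) hh (by positivity)
    _ = 1 + h * x + h ^ 2 * K ^ 2 * psi₁₁ (|x| / K) := by rw [mul_pow, sq_abs]

end Real

theorem mgf_le_of_psi11_eps_norm_le_general {Ω : Type*} [MeasureSpace Ω]
    [IsProbabilityMeasure (ℙ : Measure Ω)] (X : Ω → ℝ)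
    (ε : ℝ)
    (hXint : Integrable X) (hmean : ∫ ω, X ω = 0)
    (K : ℝ) (hK : 0 < K)
    (hint : Integrable (fun ω => Real.exp (|X ω| / K)))
    (horlicz : ∫ ω, (Real.exp (|X ω| / K) - 1 - |X ω| / K) ≤ ε)
    (h : ℝ) (hh : |h| * K ≤ 1) :
    (∫ ω, Real.exp (h * X ω)) ≤ 1 + ε * h ^ 2 * K ^ 2 ∧
      (∫ ω, Real.exp (h * X ω)) ≤ Real.exp (ε * h ^ 2 * K ^ 2) := by
  have hψ : Integrable (fun ω ↦ psi₁₁ (|X ω| / K)) :=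
    (hint.sub (integrable_const 1)).sub (hXint.abs.div_const K)
  have hlin : Integrable (fun ω ↦ 1 + h * X ω) := (integrable_const 1).add (hXint.const_mul h)
  have hbound := hlin.add (hψ.const_mul (h ^ 2 * K ^ 2))
  have hmgf : Integrable (fun ω ↦ exp (h * X ω)) :=
    hbound.mono' (hXint.aestronglyMeasurable.const_mul h).aemeasurable.exp.aestronglyMeasurable
      (ae_of_all _ fun ω ↦ by
        rw [norm_eq_abs, abs_exp]
        exact exp_mul_le_one_add_add_psi₁₁ hK hh (X ω))
  have hmgf_le : ∫ ω, exp (h * X ω) ≤ 1 + ε * h ^ 2 * K ^ 2 :=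
    calc ∫ ω, exp (h * X ω)
        ≤ ∫ ω, (1 + h * X ω + h ^ 2 * K ^ 2 * psi₁₁ (|X ω| / K)) :=
          integral_mono hmgf hbound fun ω ↦ exp_mul_le_one_add_add_psi₁₁ hK hh (X ω)
      _ = 1 + h ^ 2 * K ^ 2 * ∫ ω, psi₁₁ (|X ω| / K) := by
          rw [integral_add hlin (hψ.const_mul _), integral_add (integrable_const 1)
            (hXint.const_mul h), integral_const_mul, integral_const_mul, hmean]
          simp
      _ ≤ 1 + h ^ 2 * K ^ 2 * ε := by gcongr; exact horlicz
      _ = 1 + ε * h ^ 2 * K ^ 2 := by ring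
  exact ⟨hmgf_le, hmgf_le.trans (by linarith [add_one_le_exp (ε * h ^ 2 * K ^ 2)])⟩

/-- Theorem 1.ε: if `E X = 0` and `K > 0` satisfies `E[exp(|X|/K) − 1 − |X|/K] ≤ ε`
(so `K` is admissible for the generalized Orlicz norm `‖X‖_{ψ₁₁;ε}`), then for every
real `h` with `|h| K ≤ 1`, `E[exp(hX)] ≤ 1 + ε h² K² ≤ exp(ε h² K²)`. -/
theorem mgf_le_of_psi11_eps_norm_le {Ω : Type*} [MeasureSpace Ω]
    [IsProbabilityMeasure (ℙ : Measure Ω)] (X : Ω → ℝ)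
    (ε : ℝ) (hε : 0 < ε)
    (hXint : Integrable X) (hmean : ∫ ω, X ω = 0)
    (K : ℝ) (hK : 0 < K)
    (hint : Integrable (fun ω => Real.exp (|X ω| / K)))
    (horlicz : ∫ ω, (Real.exp (|X ω| / K) - 1 - |X ω| / K) ≤ ε)
    (h : ℝ) (hh : |h| * K ≤ 1) :
    (∫ ω, Real.exp (h * X ω)) ≤ 1 + ε * h ^ 2 * K ^ 2 ∧
      (∫ ω, Real.exp (h * X ω)) ≤ Real.exp (ε * h ^ 2 * K ^ 2) :=
  mgf_le_of_psi11_eps_norm_le_general X ε hXint hmean K hK hint horlicz h hh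
end

section
/- Let X₁, X₂, … be independent identically distributed real random variables with E[X₁] = 0, not almost surely zero, and such that exp(|X₁|/K₀) is integrable for some K₀ > 0. Set Sₙ = X₁ + ⋯ + Xₙ and σ² = E[X₁²]. Then for every δ > 0 there exists η > 0 such that for all positive integers n and all real x with 0 ≤ x ≤ η·n, P(Sₙ ≥ x) ≤ exp(−x²/((2 + δ)·n·σ²)). -/
/-!
Near `0` the cumulant generating function `Λ` of `X₁` satisfies `Λ(0) = Λ'(0) = 0` and
`Λ''(0) = σ²`, so by continuity of `Λ''` and Taylor's theorem `Λ(t) ≤ (1 + δ/2) σ² t² / 2` for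
`0 ≤ t ≤ t₀`. By independence the Chernoff bound gives `P(Sₙ ≥ x) ≤ exp(-t x + n Λ(t))`, and the
choice `t = x / ((1 + δ/2) n σ²)`, admissible as long as `x ≤ t₀ (1 + δ/2) σ² n`, turns this into
`exp(-x² / ((2 + δ) n σ²))`.
-/

open MeasureTheory ProbabilityTheory Finset Real

namespace ProbabilityTheory

variable {Ω : Type*} {m : MeasurableSpace Ω} {μ : Measure Ω}

section IntegrableExpSet

variable {X : Ω → ℝ}

lemma Ioo_subset_integrableExpSet_of_integrable_exp_abs_div (hX : AEMeasurable X μ) {K : ℝ}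
    (h : Integrable (fun ω ↦ exp (|X ω| / K)) μ) :
    Set.Ioo (-K⁻¹) K⁻¹ ⊆ integrableExpSet X μ := by
  intro t ht
  refine h.mono (aemeasurable_exp_mul t hX) (ae_of_all _ fun ω ↦ ?_)
  have htK : |t| ≤ K⁻¹ := (abs_lt.2 ht).le
  simp only [norm_eq_abs, abs_exp, exp_le_exp]
  calc t * X ω ≤ |t| * |X ω| := by rw [← abs_mul]; exact le_abs_self _
    _ ≤ K⁻¹ * |X ω| := by gcongr
    _ = |X ω| / K := by ring

lemma zero_mem_interior_integrableExpSet_of_integrable_exp_abs_div (hX : AEMeasurable X μ)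
    {K : ℝ} (hK : 0 < K) (h : Integrable (fun ω ↦ exp (|X ω| / K)) μ) :
    0 ∈ interior (integrableExpSet X μ) :=
  interior_mono (Ioo_subset_integrableExpSet_of_integrable_exp_abs_div hX h)
    (by rw [interior_Ioo]; constructor <;> simp [hK])

lemma iteratedDeriv_two_cgf_zero [IsProbabilityMeasure μ]
    (h : 0 ∈ interior (integrableExpSet X μ)) (hmean : μ[X] = 0) :
    iteratedDeriv 2 (cgf X μ) 0 = ∫ ω, X ω ^ 2 ∂μ := by
  simp [iteratedDeriv_two_cgf h, deriv_cgf_zero h, hmean]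

lemma continuousAt_iteratedDeriv_cgf {t : ℝ} (h : t ∈ interior (integrableExpSet X μ)) (n : ℕ) :
    ContinuousAt (iteratedDeriv n (cgf X μ)) t := by
  rw [iteratedDeriv_eq_iterate]
  exact (analyticOnNhd_cgf.iterated_deriv n t h).continuousAt

lemma exists_cgf_le_mul_sq_of_integral_sq_lt [IsProbabilityMeasure μ]
    (h : 0 ∈ interior (integrableExpSet X μ)) (hmean : μ[X] = 0) {c : ℝ}
    (hc : ∫ ω, X ω ^ 2 ∂μ < c) :
    ∃ t₀ > 0, ∀ t ∈ Set.Icc 0 t₀, t ∈ integrableExpSet X μ ∧ cgf X μ t ≤ c * t ^ 2 / 2 := by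
  have hnear : ∀ᶠ u in nhds 0,
      u ∈ interior (integrableExpSet X μ) ∧ iteratedDeriv 2 (cgf X μ) u < c :=
    (isOpen_interior.eventually_mem h).and <| (continuousAt_iteratedDeriv_cgf h 2).eventually
      (gt_mem_nhds (by rwa [iteratedDeriv_two_cgf_zero h hmean]))
  obtain ⟨ε, hε, hball⟩ := Metric.eventually_nhds_iff_ball.1 hnear
  have hIcc : ∀ t ∈ Set.Icc (0 : ℝ) (ε / 2), t ∈ Metric.ball 0 ε := fun t ht ↦ by
    rw [Metric.mem_ball, Real.dist_eq, sub_zero, abs_of_nonneg ht.1]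
    linarith [ht.2]
  refine ⟨ε / 2, by positivity, fun t ht ↦ ⟨interior_subset (hball t (hIcc t ht)).1, ?_⟩⟩
  obtain rfl | htpos := ht.1.eq_or_lt
  · simp
  obtain ⟨u, hu, hcgf⟩ := exists_cgf_eq_iteratedDeriv_two_cgf_mul htpos hmean
    fun s hs ↦ (hball s (hIcc s ⟨hs.1, hs.2.trans ht.2⟩)).1
  have hu_lt : iteratedDeriv 2 (cgf X μ) u < c :=
    (hball u (hIcc u ⟨hu.1.le, hu.2.le.trans ht.2⟩)).2
  rw [hcgf]
  gcongr

end IntegrableExpSet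

section Sum

variable {ι : Type*} {X : ι → Ω → ℝ} {Y : Ω → ℝ}

lemma iIndepFun.mgf_sum_eq_mgf_pow_card (hindep : iIndepFun X μ)
    (hident : ∀ i, IdentDistrib (X i) Y μ μ) (s : Finset ι) (t : ℝ) :
    mgf (∑ i ∈ s, X i) μ t = mgf Y μ t ^ #s := by
  rw [hindep.mgf_sum₀ fun i ↦ (hident i).aemeasurable_fst]
  exact prod_eq_pow_card fun i _ ↦ mgf_congr_of_identDistrib _ _ (hident i) t

lemma iIndepFun.measure_sum_ge_le_exp_card_mul_cgf (hindep : iIndepFun X μ)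
    (hident : ∀ i, IdentDistrib (X i) Y μ μ) (s : Finset ι) {t : ℝ} (ht : 0 ≤ t)
    (hint : Integrable (fun ω ↦ exp (t * Y ω)) μ) (x : ℝ) :
    μ.real {ω | x ≤ ∑ i ∈ s, X i ω} ≤ exp (-t * x + #s * cgf Y μ t) := by
  have := hindep.isProbabilityMeasure
  have hmgf := hindep.mgf_sum_eq_mgf_pow_card hident s t
  -- the mgf of the sum is positive, which forces integrability
  have hint_sum : Integrable (fun ω ↦ exp (t * (∑ i ∈ s, X i) ω)) μ :=
    mgf_pos_iff.1 (hmgf ▸ pow_pos (mgf_pos hint) _)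
  have hcgf : cgf (∑ i ∈ s, X i) μ t = #s * cgf Y μ t := by
    rw [cgf, hmgf, log_pow, cgf]
  simpa only [hcgf, Finset.sum_apply] using measure_ge_le_exp_cgf x ht hint_sum

end Sum

lemma integral_sq_pos_of_not_ae_eq_zero {X : Ω → ℝ}
    (hX : Integrable (fun ω ↦ X ω ^ 2) μ) (hne : ¬ X =ᵐ[μ] 0) :
    0 < ∫ ω, X ω ^ 2 ∂μ := by
  refine (integral_nonneg fun ω ↦ sq_nonneg (X ω)).lt_of_ne fun h ↦ hne ?_
  filter_upwards [(integral_eq_zero_iff_of_nonneg (fun ω ↦ sq_nonneg (X ω)) hX).1 h.symm]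
    with ω hω
  exact pow_eq_zero_iff two_ne_zero |>.1 hω

end ProbabilityTheory

theorem iid_subexponential_gaussian_tail_general {Ω : Type*} [MeasureSpace Ω]
    [IsProbabilityMeasure (ℙ : Measure Ω)]
    (X : ℕ → Ω → ℝ)
    (hindep : iIndepFun X ℙ)
    (hident : ∀ i, IdentDistrib (X i) (X 0) ℙ ℙ)
    (hmean : ∫ ω, X 0 ω = 0)
    (hne : ¬ (X 0 =ᵐ[(ℙ : Measure Ω)] 0))
    (hsub : ∃ K₀ : ℝ, 0 < K₀ ∧ Integrable (fun ω => Real.exp (|X 0 ω| / K₀)))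
    (σ2 : ℝ) (hσ2 : σ2 = ∫ ω, (X 0 ω) ^ 2) :
    ∀ δ : ℝ, 0 < δ → ∃ η : ℝ, 0 < η ∧
      ∀ n : ℕ, 0 < n → ∀ x : ℝ, 0 ≤ x → x ≤ η * n →
        (ℙ {ω | x ≤ ∑ i ∈ Finset.range n, X i ω}).toReal ≤
          Real.exp (-(x ^ 2 / ((2 + δ) * n * σ2))) := by
  obtain ⟨K₀, hK₀, hexp⟩ := hsub
  have h0 := zero_mem_interior_integrableExpSet_of_integrable_exp_abs_div
    (hident 0).aemeasurable_fst hK₀ hexp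
  have hσ2_pos : 0 < σ2 := hσ2 ▸ integral_sq_pos_of_not_ae_eq_zero
    (integrable_pow_of_mem_interior_integrableExpSet h0 2) hne
  intro δ hδ
  set c := (1 + δ / 2) * σ2
  obtain ⟨t₀, ht₀, hcgf⟩ := exists_cgf_le_mul_sq_of_integral_sq_lt h0 hmean
    (c := c) (by rw [← hσ2]; simp only [c]; nlinarith)
  refine ⟨t₀ * c, by positivity, fun n hn x hx hxn ↦ ?_⟩
  have hn' : (0 : ℝ) < n := Nat.cast_pos.2 hn
  set t := x / (n * c)
  have ht : t ∈ Set.Icc 0 t₀ :=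
    ⟨by positivity, div_le_of_le_mul₀ (by positivity) ht₀.le (by linarith)⟩
  obtain ⟨ht_int, ht_cgf⟩ := hcgf t ht
  calc (ℙ {ω | x ≤ ∑ i ∈ Finset.range n, X i ω}).toReal
      ≤ exp (-t * x + #(range n) * cgf (X 0) ℙ t) :=
        hindep.measure_sum_ge_le_exp_card_mul_cgf hident (range n) ht.1 ht_int x
    _ ≤ exp (-t * x + n * (c * t ^ 2 / 2)) := by rw [card_range]; gcongr
    _ = exp (-(x ^ 2 / ((2 + δ) * n * σ2))) := by
        congr 1
        simp only [t, c]
        field_simp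
        ring

/-- Corollary 1 (ε-δ form): for i.i.d. mean-zero sub-exponential `X₁, X₂, …` (not a.s.
zero), with `σ² = E X₁²`, for every `δ > 0` there is `η > 0` such that for all `n ≥ 1`
and all `0 ≤ x ≤ η n`, `P(Sₙ ≥ x) ≤ exp(−x²/((2+δ) n σ²))`. -/
theorem iid_subexponential_gaussian_tail {Ω : Type*} [MeasureSpace Ω]
    [IsProbabilityMeasure (ℙ : Measure Ω)]
    (X : ℕ → Ω → ℝ)
    (hindep : iIndepFun X ℙ)
    (hident : ∀ i, IdentDistrib (X i) (X 0) ℙ ℙ)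
    (hXint : Integrable (X 0)) (hmean : ∫ ω, X 0 ω = 0)
    (hne : ¬ (X 0 =ᵐ[(ℙ : Measure Ω)] 0))
    (hsub : ∃ K₀ : ℝ, 0 < K₀ ∧ Integrable (fun ω => Real.exp (|X 0 ω| / K₀)))
    (σ2 : ℝ) (hσ2 : σ2 = ∫ ω, (X 0 ω) ^ 2) :
    ∀ δ : ℝ, 0 < δ → ∃ η : ℝ, 0 < η ∧
      ∀ n : ℕ, 0 < n → ∀ x : ℝ, 0 ≤ x → x ≤ η * n →
        (ℙ {ω | x ≤ ∑ i ∈ Finset.range n, X i ω}).toReal ≤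
          Real.exp (-(x ^ 2 / ((2 + δ) * n * σ2))) :=
  iid_subexponential_gaussian_tail_general X hindep hident hmean hne hsub σ2 hσ2
end
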